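/- The example signalling racbox: define the box P a b x0 x1 y y' := if a = y' then (if b = x_y then 1/2 else 0) else 1/4. Then: (i) P is a box (nonnegative with outputs summing to 1 for every input) and a racbox; (ii) P is nonsignalling from Bob to Alice, with Alice's marginal Σ_b P a b x0 x1 y y' = 1/2 for all inputs; (iii) P is signalling from Alice to Bob: Bob's marginal satisfies Σ_a P a b x0 x1 y y' = 3/4 if b = x_y and = 1/4 if b ≠ x_y, so it depends on Alice's inputs (in particular, for y = false Bob's output equals x0 with probability 3/4). -/
import Mathlib


/-- A bipartite box: conditional probability of outputs `a, b` given Alice's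
inputs `x0, x1` and Bob's inputs `y, y'`. -/
def IsBox (P : Bool → Bool → Bool → Bool → Bool → Bool → ℝ) : Prop :=
  (∀ a b x0 x1 y y', 0 ≤ P a b x0 x1 y y') ∧
  (∀ x0 x1 y y', ∑ a : Bool, ∑ b : Bool, P a b x0 x1 y y' = 1)

/-- Nonsignalling from Bob to Alice: Alice's marginal does not depend on `(y, y')`. -/
def NonsignallingBtoA (P : Bool → Bool → Bool → Bool → Bool → Bool → ℝ) : Prop :=
  ∀ a x0 x1 y₁ y₁' y₂ y₂',
    ∑ b : Bool, P a b x0 x1 y₁ y₁' = ∑ b : Bool, P a b x0 x1 y₂ y₂'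

/-- Nonsignalling from Alice to Bob: Bob's marginal does not depend on `(x0, x1)`. -/
def NonsignallingAtoB (P : Bool → Bool → Bool → Bool → Bool → Bool → ℝ) : Prop :=
  ∀ b x0 x1 x0' x1' y y',
    ∑ a : Bool, P a b x0 x1 y y' = ∑ a : Bool, P a b x0' x1' y y'

/-- A racbox: whenever `a = y'`, the box acts as a random access code, i.e.
`b = x_y` with probability one. -/
def IsRacbox (P : Bool → Bool → Bool → Bool → Bool → Bool → ℝ) : Prop :=
  ∀ a b x0 x1 y y', a = y' → b ≠ (if y then x1 else x0) → P a b x0 x1 y y' = 0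


/-- The example signalling racbox: for `a = y'` it works as a RAC, and for
`a ≠ y'` Bob receives a completely random output. -/
noncomputable def PsigRacbox (a b x0 x1 y y' : Bool) : ℝ :=
  if a = y' then (if b = (if y then x1 else x0) then 1/2 else 0) else 1/4

/-- The example signalling racbox: it is a box and a racbox; it is
nonsignalling from Bob to Alice (Alice's marginal is constantly `1/2`);
but Bob's marginal is `3/4` on `b = x_y` and `1/4` otherwise, so it is
signalling from Alice to Bob. -/
theorem signalling_racbox_properties :
    IsBox PsigRacbox ∧ IsRacbox PsigRacbox ∧
    NonsignallingBtoA PsigRacbox ∧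
    (∀ a x0 x1 y y' : Bool, ∑ b : Bool, PsigRacbox a b x0 x1 y y' = 1/2) ∧
    (∀ b x0 x1 y y' : Bool, ∑ a : Bool, PsigRacbox a b x0 x1 y y'
        = if b = (if y then x1 else x0) then 3/4 else 1/4) ∧
    ¬ NonsignallingAtoB PsigRacbox := by
  refine ⟨⟨?_, ?_⟩, ?_, ?_, ?_, ?_, ?_⟩
  · intro a b x0 x1 y y'
    unfold PsigRacbox
    split
    · split <;> split <;> norm_num
    · norm_num
  · intro x0 x1 y y'
    cases x0 <;> cases x1 <;> cases y <;> cases y' <;>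
      simp [PsigRacbox, Fintype.sum_bool] <;> norm_num
  · intro a b x0 x1 y y' h hb
    simp [PsigRacbox, h, hb]
  · intro a x0 x1 y1 y1' y2 y2'
    cases a <;> cases x0 <;> cases x1 <;> cases y1 <;> cases y1' <;> cases y2 <;> cases y2' <;>
      simp [PsigRacbox, Fintype.sum_bool] <;> norm_num
  · intro a x0 x1 y y'
    cases a <;> cases x0 <;> cases x1 <;> cases y <;> cases y' <;>
      simp [PsigRacbox, Fintype.sum_bool] <;> norm_num
  · intro b x0 x1 y y'
    cases b <;> cases x0 <;> cases x1 <;> cases y <;> cases y' <;>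
      simp [PsigRacbox, Fintype.sum_bool] <;> norm_num
  · intro h
    have := h true true true false false false false
    simp [PsigRacbox, Fintype.sum_bool] at this
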